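/- Fix T ≥ 1, X ∈ ℝ^{n×T}, and Y ∈ ℝ^{m×T}. Then the similarity matching cost admits the embedding identity: (1/T²) tr(YᵀY YᵀY − 2 XᵀX YᵀY) = min over W ∈ ℝ^{m×n} of [ max over M ∈ ℝ^{m×m} of S(W,M,Y) ], where S(W,M,Y) = 2‖W‖_F² − ‖M‖_F² + (2/T) tr(Yᵀ M Y) − (4/T)⟨WX,Y⟩_F; moreover the inner maximum over M and the outer minimum over W are both attained (at M = (1/T)YYᵀ and W = (1/T)YXᵀ, respectively). Equivalently, SM(Y) − (1/T²)‖XᵀX‖_F² equals this min-max value, so the Y-minimizers of the similarity matching objective SM coincide with the Y-minimizers of the embedded cost. -/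
import Mathlib
open Matrix

noncomputable def frobSq {k l : ℕ} (A : Matrix (Fin k) (Fin l) ℝ) : ℝ := (Aᵀ * A).trace

lemma trace_transpose_mul_comm {k l : ℕ} (A B : Matrix (Fin k) (Fin l) ℝ) :
    (Aᵀ * B).trace = (Bᵀ * A).trace := by
  rw [← Matrix.trace_transpose (Aᵀ * B), Matrix.transpose_mul, Matrix.transpose_transpose]

lemma frobSq_nonneg {k l : ℕ} (A : Matrix (Fin k) (Fin l) ℝ) : 0 ≤ frobSq A := by
  unfold frobSq
  rw [Matrix.trace]
  apply Finset.sum_nonneg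
  intro i _
  rw [Matrix.diag_apply, Matrix.mul_apply]
  apply Finset.sum_nonneg
  intro j _
  simp [Matrix.transpose_apply, mul_self_nonneg]

lemma frobSq_sub {k l : ℕ} (A B : Matrix (Fin k) (Fin l) ℝ) :
    frobSq (A - B) = frobSq A - 2 * (Aᵀ * B).trace + frobSq B := by
  unfold frobSq
  rw [Matrix.transpose_sub, Matrix.sub_mul, Matrix.mul_sub, Matrix.mul_sub,
    Matrix.trace_sub, Matrix.trace_sub, Matrix.trace_sub,
    trace_transpose_mul_comm B A]
  ring

/-- the embedding identity. The inner maximum over `M` is attained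
at `M⋆ = (1/T)YYᵀ` (for every `W`), the outer minimum over `W` is attained at
`W⋆ = (1/T)YXᵀ`, the resulting min-max value equals
`(1/T²) tr(YᵀY YᵀY − 2 XᵀX YᵀY)`, and it also equals `SM(Y) − (1/T²)‖XᵀX‖_F²`. -/
theorem embedding_identity
    {m n T : ℕ} (hT : 1 ≤ T)
    (X : Matrix (Fin n) (Fin T) ℝ) (Y : Matrix (Fin m) (Fin T) ℝ)
    (S : Matrix (Fin m) (Fin n) ℝ → Matrix (Fin m) (Fin m) ℝ → ℝ)
    (hS : ∀ W M, S W M = 2 * frobSq W - frobSq M + (2 / (T : ℝ)) * (Yᵀ * M * Y).trace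
        - (4 / (T : ℝ)) * ((W * X)ᵀ * Y).trace)
    (Mstar : Matrix (Fin m) (Fin m) ℝ) (hMstar : Mstar = (T : ℝ)⁻¹ • (Y * Yᵀ))
    (Wstar : Matrix (Fin m) (Fin n) ℝ) (hWstar : Wstar = (T : ℝ)⁻¹ • (Y * Xᵀ)) :
    (∀ W, IsGreatest {v : ℝ | ∃ M, v = S W M} (S W Mstar)) ∧
      IsLeast {v : ℝ | ∃ W, v = S W Mstar} (S Wstar Mstar) ∧
      (1 / (T : ℝ) ^ 2) * (Yᵀ * Y * (Yᵀ * Y) - (2 : ℝ) • (Xᵀ * X * (Yᵀ * Y))).trace =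
        S Wstar Mstar ∧
      (1 / (T : ℝ) ^ 2) * ((Xᵀ * X - Yᵀ * Y)ᵀ * (Xᵀ * X - Yᵀ * Y)).trace -
          (1 / (T : ℝ) ^ 2) * frobSq (Xᵀ * X) = S Wstar Mstar := by
  have ht : (0:ℝ) < (T:ℝ) := by exact_mod_cast Nat.lt_of_lt_of_le Nat.zero_lt_one hT
  have htne : (T:ℝ) ≠ 0 := ne_of_gt ht
  -- cyclic trace identities
  have h1 : ∀ M : Matrix (Fin m) (Fin m) ℝ,
      (Yᵀ * M * Y).trace = (Mᵀ * (Y * Yᵀ)).trace := by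
    intro M
    rw [Matrix.mul_assoc, Matrix.trace_mul_comm Yᵀ (M * Y), Matrix.mul_assoc,
      Matrix.trace_mul_comm M (Y * Yᵀ)]
    rw [← Matrix.trace_transpose ((Y * Yᵀ) * M), Matrix.transpose_mul,
      Matrix.transpose_mul, Matrix.transpose_transpose]
  have h2 : ∀ W : Matrix (Fin m) (Fin n) ℝ,
      ((W * X)ᵀ * Y).trace = (Wᵀ * (Y * Xᵀ)).trace := by
    intro W
    rw [Matrix.transpose_mul, Matrix.mul_assoc, Matrix.trace_mul_comm Xᵀ (Wᵀ * Y),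
      Matrix.mul_assoc]
  have hS' : ∀ W M, S W M = 2 * frobSq W - frobSq M
      + (2 / (T : ℝ)) * (Mᵀ * (Y * Yᵀ)).trace
      - (4 / (T : ℝ)) * (Wᵀ * (Y * Xᵀ)).trace := by
    intro W M; rw [hS, h1, h2]
  -- key quadratic identities
  have key1 : ∀ W M, S W Mstar - S W M = frobSq (M - Mstar) := by
    intro W M
    rw [hS', hS', frobSq_sub]
    subst hMstar
    unfold frobSq
    simp only [Matrix.transpose_smul, Matrix.transpose_mul, Matrix.transpose_transpose,
      Matrix.smul_mul, Matrix.mul_smul, Matrix.trace_smul, smul_eq_mul, smul_smul]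
    field_simp
    ring
  have key2 : ∀ W, S W Mstar - S Wstar Mstar = 2 * frobSq (W - Wstar) := by
    intro W
    rw [hS', hS', frobSq_sub]
    subst hWstar
    unfold frobSq
    simp only [Matrix.transpose_smul, Matrix.transpose_mul, Matrix.transpose_transpose,
      Matrix.smul_mul, Matrix.mul_smul, Matrix.trace_smul, smul_eq_mul, smul_smul]
    field_simp
    ring
  have ha : ((Y * Yᵀ) * (Y * Yᵀ)).trace = (Yᵀ * Y * (Yᵀ * Y)).trace := by
    rw [Matrix.mul_assoc, Matrix.trace_mul_comm Y (Yᵀ * (Y * Yᵀ))]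
    simp [Matrix.mul_assoc]
  have hb : ((X * Yᵀ) * (Y * Xᵀ)).trace = (Xᵀ * X * (Yᵀ * Y)).trace := by
    rw [Matrix.trace_mul_comm, Matrix.mul_assoc, Matrix.trace_mul_comm Y (Xᵀ * (X * Yᵀ))]
    simp [Matrix.mul_assoc]
  have h3 : (1 / (T : ℝ) ^ 2) * (Yᵀ * Y * (Yᵀ * Y) - (2 : ℝ) • (Xᵀ * X * (Yᵀ * Y))).trace
      = S Wstar Mstar := by
    rw [hS']
    subst hMstar; subst hWstar
    unfold frobSq
    simp only [Matrix.transpose_smul, Matrix.transpose_mul, Matrix.transpose_transpose,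
      Matrix.smul_mul, Matrix.mul_smul, Matrix.trace_smul, smul_eq_mul, smul_smul,
      Matrix.trace_sub, ha, hb]
    field_simp
    ring
  refine ⟨?_, ?_, h3, ?_⟩
  · intro W
    refine ⟨⟨Mstar, rfl⟩, ?_⟩
    rintro v ⟨M, rfl⟩
    have := key1 W M
    have h0 := frobSq_nonneg (M - Mstar)
    linarith
  · refine ⟨⟨Wstar, rfl⟩, ?_⟩
    rintro v ⟨W, rfl⟩
    have := key2 W
    have h0 := frobSq_nonneg (W - Wstar)
    linarith
  · rw [show ((Xᵀ * X - Yᵀ * Y)ᵀ * (Xᵀ * X - Yᵀ * Y)).trace = frobSq (Xᵀ * X - Yᵀ * Y)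
      from rfl, frobSq_sub, ← h3]
    unfold frobSq
    simp only [Matrix.transpose_mul, Matrix.transpose_transpose, Matrix.trace_sub,
      Matrix.trace_smul, smul_eq_mul]
    ring
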